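/- Let m ≥ 1, let T⁽¹⁾ and T⁽²⁾ be distinct m-bit templates, and let B be drawn uniformly at random from the 2^M equiprobable M-bit blocks. For a template T and a position k with 0 ≤ k ≤ M−m, let I_k^{(T)} be the indicator that B(k+i) = T(i) for all i < m. For d with 1 ≤ d ≤ m−1 define e_d = 1 if T⁽¹⁾(i) = T⁽²⁾(i+d) for all i < m−d and e_d = 0 otherwise, and define e_{−d} = 1 if T⁽¹⁾(i+d) = T⁽²⁾(i) for all i < m−d and e_{−d} = 0 otherwise. Then for positions k, l with 0 ≤ k, l ≤ M−m: E[I_k^{(T⁽¹⁾)} I_l^{(T⁽²⁾)}] = 0 if k = l; E[I_k^{(T⁽¹⁾)} I_l^{(T⁽²⁾)}] = e_{k−l}/2^{m+|k−l|} if 1 ≤ |k−l| ≤ m−1; and E[I_k^{(T⁽¹⁾)} I_l^{(T⁽²⁾)}] = 1/2^{2m} if |k−l| ≥ m. -/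

import Mathlib

/-!
Both templates occur (at `k` and `l`) iff `B` agrees on the union of the two windows with the
overlay of the placed templates, and such an overlay exists iff the placed templates agree on
the overlap of the windows. Fixing `s` of the `M` bits leaves `2^(M - s)` blocks, and the union
of the windows has `m + min m |k - l|` positions. Agreement on the overlap means `T1 = T2` for
`k = l`, is exactly `e_{k-l}` for `0 < |k - l| < m`, and is vacuous for `|k - l| ≥ m`.
-/

open scoped Classical

/-- `T` occurs in the block `B` at position `k`: `B (k+i) = T i` for all `i < m`. -/
def occursAt {m M : ℕ} (T : Fin m → Bool) (B : Fin M → Bool) (k : ℕ) : Prop :=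
  ∀ i : Fin m, ∀ h : k + i.1 < M, B ⟨k + i.1, h⟩ = T i

/-- Expectation of `f` when the block is drawn uniformly from the `2^M` `M`-bit blocks. -/
noncomputable def unifExp (M : ℕ) (f : (Fin M → Bool) → ℝ) : ℝ :=
  (∑ B : Fin M → Bool, f B) / 2 ^ M

/-- `e_d` for `d ≥ 1`: equals `1` if `T¹(i) = T²(i+d)` for all `i < m - d`, else `0`. -/
noncomputable def ePlus {m : ℕ} (T1 T2 : Fin m → Bool) (d : ℕ) : ℝ :=
  if ∀ i : ℕ, ∀ h : i < m - d, T1 ⟨i, by omega⟩ = T2 ⟨i + d, by omega⟩ then 1 else 0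

/-- `e_{-d}` for `d ≥ 1`: equals `1` if `T¹(i+d) = T²(i)` for all `i < m - d`, else `0`. -/
noncomputable def eMinus {m : ℕ} (T1 T2 : Fin m → Bool) (d : ℕ) : ℝ :=
  if ∀ i : ℕ, ∀ h : i < m - d, T1 ⟨i + d, by omega⟩ = T2 ⟨i, by omega⟩ then 1 else 0

open Finset

section Counting

variable {ι β : Type*} [Fintype ι] [DecidableEq ι] [Fintype β] [DecidableEq β]

theorem card_filter_forall_mem_eq (s : Finset ι) (f : ι → β) :
    #{x : ι → β | ∀ i ∈ s, x i = f i} = Fintype.card β ^ (Fintype.card ι - #s) := by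
  have hpi : ({x : ι → β | ∀ i ∈ s, x i = f i} : Finset (ι → β)) =
      Fintype.piFinset fun i => if i ∈ s then {f i} else univ := by
    ext x
    simp only [mem_filter, mem_univ, true_and, Fintype.mem_piFinset]
    refine forall_congr' fun i => ?_
    split_ifs <;> simp [*]
  simp only [hpi, Fintype.card_piFinset, apply_ite card, card_singleton, card_univ, prod_ite,
    prod_const_one, one_mul, prod_const]
  simp [filter_not, card_sdiff]

theorem card_filter_forall_mem_eq_and_forall_mem_eq (s t : Finset ι) {f g : ι → β}
    (hfg : ∀ i ∈ s ∩ t, f i = g i) :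
    #{x : ι → β | (∀ i ∈ s, x i = f i) ∧ ∀ i ∈ t, x i = g i} =
      Fintype.card β ^ (Fintype.card ι - #(s ∪ t)) := by
  rw [← card_filter_forall_mem_eq (s ∪ t) (s.piecewise f g)]
  congr 1
  ext x
  simp only [mem_filter, mem_univ, true_and, mem_union]
  constructor
  · rintro ⟨hs, ht⟩ i (hi | hi)
    · rw [piecewise_eq_of_mem _ _ _ hi, hs i hi]
    · by_cases his : i ∈ s
      · rw [piecewise_eq_of_mem _ _ _ his, hs i his]
      · rw [piecewise_eq_of_notMem _ _ _ his, ht i hi]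
  · intro h
    refine ⟨fun i hi => by simpa [piecewise_eq_of_mem _ _ _ hi] using h i (.inl hi), fun i hi => ?_⟩
    by_cases his : i ∈ s
    · rw [h i (.inl his), piecewise_eq_of_mem _ _ _ his, hfg i (mem_inter.2 ⟨his, hi⟩)]
    · rw [h i (.inr hi), piecewise_eq_of_notMem _ _ _ his]

end Counting

theorem unifExp_indicator_mul_indicator (M : ℕ) (p q : (Fin M → Bool) → Prop) :
    unifExp M (fun B => (if p B then (1:ℝ) else 0) * (if q B then (1:ℝ) else 0)) =
      #{B | p B ∧ q B} / 2 ^ M := by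
  simp only [unifExp, ite_zero_mul_ite_zero, mul_one, sum_boole]

def window (M k m : ℕ) : Finset (Fin M) := {j | k ≤ j.1 ∧ j.1 < k + m}

def placeAt {m : ℕ} (M : ℕ) (T : Fin m → Bool) (k : ℕ) (j : Fin M) : Bool :=
  if h : k ≤ j.1 ∧ j.1 < k + m then T ⟨j.1 - k, by omega⟩ else false

theorem occursAt_iff_forall_mem_window {m M : ℕ} (T : Fin m → Bool) (B : Fin M → Bool) (k : ℕ) :
    occursAt T B k ↔ ∀ j ∈ window M k m, B j = placeAt M T k j := by
  simp only [occursAt, window, mem_filter, mem_univ, true_and]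
  constructor
  · rintro h j hj
    rw [placeAt, dif_pos hj]
    convert h ⟨j.1 - k, by omega⟩ (by simp; omega) using 2
    ext; simp; omega
  · intro h i hi
    rw [h _ ⟨by simp, by simp⟩, placeAt, dif_pos ⟨by simp, by simp⟩]
    simp

theorem map_valEmbedding_window {M k m : ℕ} (h : k + m ≤ M) :
    (window M k m).map Fin.valEmbedding = Ico k (k + m) := by
  ext j
  simp only [window, mem_map, mem_filter, mem_univ, true_and, Fin.valEmbedding_apply, mem_Ico]
  exact ⟨by rintro ⟨j, hj, rfl⟩; exact hj, fun hj => ⟨⟨j, by omega⟩, hj, rfl⟩⟩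

theorem card_window_union_window {M k l m : ℕ} (hk : k + m ≤ M) (hl : l + m ≤ M) :
    #(window M k m ∪ window M l m) = m + min m (Nat.dist k l) := by
  have hunion := card_union_add_card_inter (Ico k (k + m)) (Ico l (l + m))
  rw [← card_map Fin.valEmbedding, map_union, map_valEmbedding_window hk,
    map_valEmbedding_window hl]
  simp only [Ico_inter_Ico, Nat.card_Ico, Nat.dist] at hunion ⊢
  omega

section Overlap

def OverlapCompatible {m : ℕ} (M : ℕ) (T1 : Fin m → Bool) (k : ℕ) (T2 : Fin m → Bool) (l : ℕ) :
    Prop :=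
  ∀ j ∈ window M k m ∩ window M l m, placeAt M T1 k j = placeAt M T2 l j

variable {m M k l : ℕ} {T1 T2 : Fin m → Bool}

theorem OverlapCompatible.symm (h : OverlapCompatible M T1 k T2 l) :
    OverlapCompatible M T2 l T1 k :=
  fun j hj => (h j (mem_inter.2 (mem_inter.1 hj).symm)).symm

theorem overlapCompatible_comm :
    OverlapCompatible M T1 k T2 l ↔ OverlapCompatible M T2 l T1 k :=
  ⟨.symm, .symm⟩

theorem OverlapCompatible.of_occursAt {B : Fin M → Bool} (h1 : occursAt T1 B k)
    (h2 : occursAt T2 B l) : OverlapCompatible M T1 k T2 l := by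
  rw [occursAt_iff_forall_mem_window] at h1 h2
  intro j hj
  rw [← h1 j (mem_inter.1 hj).1, ← h2 j (mem_inter.1 hj).2]

theorem unifExp_occursAt_mul_occursAt_of_compatible (h : OverlapCompatible M T1 k T2 l) :
    unifExp M (fun B => (if occursAt T1 B k then (1:ℝ) else 0) *
        (if occursAt T2 B l then (1:ℝ) else 0)) = 1 / 2 ^ #(window M k m ∪ window M l m) := by
  have hcard : #{B : Fin M → Bool | occursAt T1 B k ∧ occursAt T2 B l} =
      2 ^ (M - #(window M k m ∪ window M l m)) := by
    simp only [occursAt_iff_forall_mem_window]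
    -- `convert`, not `rw`: the two filters carry different (classical vs. structural) `Decidable` instances
    convert card_filter_forall_mem_eq_and_forall_mem_eq _ _ h <;> simp
  have hle : #(window M k m ∪ window M l m) ≤ M := card_le_univ _ |>.trans_eq (Fintype.card_fin M)
  rw [unifExp_indicator_mul_indicator, hcard, Nat.cast_pow, Nat.cast_ofNat,
    div_eq_div_iff (by positivity) (by positivity), one_mul, ← pow_add, Nat.sub_add_cancel hle]

theorem unifExp_occursAt_mul_occursAt_of_not_compatible (h : ¬OverlapCompatible M T1 k T2 l) :
    unifExp M (fun B => (if occursAt T1 B k then (1:ℝ) else 0) *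
        (if occursAt T2 B l then (1:ℝ) else 0)) = 0 := by
  have hzero (B : Fin M → Bool) : ¬(occursAt T1 B k ∧ occursAt T2 B l) :=
    fun hB => h (.of_occursAt hB.1 hB.2)
  rw [unifExp_indicator_mul_indicator, filter_false_of_mem fun B _ => hzero B, card_empty,
    Nat.cast_zero, zero_div]

theorem not_overlapCompatible_self (hk : k + m ≤ M) (hT : T1 ≠ T2) :
    ¬OverlapCompatible M T1 k T2 k := by
  refine fun h => hT (funext fun i => ?_)
  have hj : (⟨k + i, by omega⟩ : Fin M) ∈ window M k m ∩ window M k m := by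
    simp [window]
  simpa [placeAt] using h _ hj

theorem overlapCompatible_of_le_dist (h : m ≤ Nat.dist k l) : OverlapCompatible M T1 k T2 l := by
  intro j hj
  simp only [window, mem_inter, mem_filter, mem_univ, true_and, Nat.dist] at hj h
  omega

theorem ePlus_eq_ite_overlapCompatible (hl : l + m ≤ M) (hlk : l ≤ k) :
    ePlus T1 T2 (k - l) = if OverlapCompatible M T1 k T2 l then 1 else 0 := by
  refine if_congr ⟨fun h j hj => ?_, fun h i hi => ?_⟩ rfl rfl
  · simp only [window, mem_inter, mem_filter, mem_univ, true_and] at hj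
    simp only [placeAt, dif_pos hj.1, dif_pos hj.2]
    convert h (j - k) (by omega) using 2
    simp; omega
  · have hj : (⟨k + i, by omega⟩ : Fin M) ∈ window M k m ∩ window M l m := by
      simp [window]; omega
    convert h _ hj using 1
    · rw [placeAt, dif_pos (show k ≤ k + i ∧ k + i < k + m by omega)]
      simp
    · rw [placeAt, dif_pos (show l ≤ k + i ∧ k + i < l + m by omega)]
      congr 1
      ext
      simp
      omega

theorem eMinus_eq_ePlus : eMinus T1 T2 k = ePlus T2 T1 k :=
  if_congr ⟨fun h i hi => (h i hi).symm, fun h i hi => (h i hi).symm⟩ rfl rfl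

end Overlap

theorem expectation_indicator_products_two_templates_general (m M k l : ℕ)
    (T1 T2 : Fin m → Bool) (hT : T1 ≠ T2) (hk : k + m ≤ M) (hl : l + m ≤ M) :
    (k = l →
      unifExp M (fun B => (if occursAt T1 B k then (1:ℝ) else 0) *
        (if occursAt T2 B l then (1:ℝ) else 0)) = 0) ∧
    (1 ≤ Nat.dist k l → Nat.dist k l ≤ m - 1 →
      unifExp M (fun B => (if occursAt T1 B k then (1:ℝ) else 0) *
        (if occursAt T2 B l then (1:ℝ) else 0))
        = (if l ≤ k then ePlus T1 T2 (k - l) else eMinus T1 T2 (l - k))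
            / 2 ^ (m + Nat.dist k l)) ∧
    (m ≤ Nat.dist k l →
      unifExp M (fun B => (if occursAt T1 B k then (1:ℝ) else 0) *
        (if occursAt T2 B l then (1:ℝ) else 0)) = 1 / 2 ^ (2 * m)) := by
  have hcard := card_window_union_window hk hl
  refine ⟨fun hkl => ?_, fun hd1 hd2 => ?_, fun hd => ?_⟩
  · subst hkl
    exact unifExp_occursAt_mul_occursAt_of_not_compatible (not_overlapCompatible_self hk hT)
  · have he : (if l ≤ k then ePlus T1 T2 (k - l) else eMinus T1 T2 (l - k)) =
        if OverlapCompatible M T1 k T2 l then 1 else 0 := by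
      by_cases hlk : l ≤ k
      · rw [if_pos hlk, ePlus_eq_ite_overlapCompatible hl hlk]
      · rw [if_neg hlk, eMinus_eq_ePlus, ePlus_eq_ite_overlapCompatible hk (by omega)]
        exact if_congr overlapCompatible_comm.symm rfl rfl
    rw [he]
    split_ifs with hc
    · rw [unifExp_occursAt_mul_occursAt_of_compatible hc, hcard, min_eq_right (by omega)]
    · rw [unifExp_occursAt_mul_occursAt_of_not_compatible hc, zero_div]
  · rw [unifExp_occursAt_mul_occursAt_of_compatible (overlapCompatible_of_le_dist hd), hcard,
      min_eq_left hd, two_mul]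

theorem expectation_indicator_products_two_templates (m M k l : ℕ) (hm : 1 ≤ m)
    (T1 T2 : Fin m → Bool) (hT : T1 ≠ T2) (hk : k + m ≤ M) (hl : l + m ≤ M) :
    (k = l →
      unifExp M (fun B => (if occursAt T1 B k then (1:ℝ) else 0) *
        (if occursAt T2 B l then (1:ℝ) else 0)) = 0) ∧
    (1 ≤ Nat.dist k l → Nat.dist k l ≤ m - 1 →
      unifExp M (fun B => (if occursAt T1 B k then (1:ℝ) else 0) *
        (if occursAt T2 B l then (1:ℝ) else 0))
        = (if l ≤ k then ePlus T1 T2 (k - l) else eMinus T1 T2 (l - k))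
            / 2 ^ (m + Nat.dist k l)) ∧
    (m ≤ Nat.dist k l →
      unifExp M (fun B => (if occursAt T1 B k then (1:ℝ) else 0) *
        (if occursAt T2 B l then (1:ℝ) else 0)) = 1 / 2 ^ (2 * m)) :=
  expectation_indicator_products_two_templates_general m M k l T1 T2 hT hk hl
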